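/- arXiv:1909.12954 — 2 statements merged into one kernel-verified Lean document; each statement's English description precedes it below -/
import Mathlib

section
/- For the measurement-dependent BEC with parameter τ ∈ [0,1], the capacity C(τ) = max_{q∈[0,1]} (1−qτ)h_b(q) satisfies C(τ) ≥ (1−τ/2)·log 2 > 0 for all τ ∈ [0,1], and in particular C(1) ≥ (log 2)/2 > 0, so even when the measurement-independent BEC with τ=1 has zero capacity, the measurement-dependent channel permits positive-rate search. -/
open Real Set

/-- The binary entropy function (natural log). -/
noncomputable def binEnt (p : ℝ) : ℝ := -p * Real.log p - (1 - p) * Real.log (1 - p)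

lemma binEnt_cont : Continuous binEnt := by
  have h : Continuous fun x : ℝ => x * Real.log x := Real.continuous_mul_log
  have : Continuous fun p : ℝ => -(p * Real.log p) - ((1-p) * Real.log (1-p)) := by
    exact (h.neg).sub (h.comp (continuous_const.sub continuous_id))
  convert this using 2 with p
  unfold binEnt; ring

lemma binEnt_half : binEnt (1/2) = Real.log 2 := by
  unfold binEnt
  rw [show (1:ℝ) - 1/2 = 1/2 by ring, show Real.log (1/2) = -Real.log 2 by
    rw [Real.log_div one_ne_zero two_ne_zero, Real.log_one]; ring]
  ring

lemma key (τ : ℝ) (hτ : τ ∈ Set.Icc (0:ℝ) 1) :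
    (1 - τ / 2) * Real.log 2
      ≤ sSup ((fun q : ℝ => (1 - q * τ) * binEnt q) '' Set.Icc (0:ℝ) 1) := by
  have hc : Continuous fun q : ℝ => (1 - q * τ) * binEnt q :=
    (continuous_const.sub (continuous_id.mul continuous_const)).mul binEnt_cont
  have hbdd : BddAbove ((fun q : ℝ => (1 - q * τ) * binEnt q) '' Set.Icc (0:ℝ) 1) :=
    (isCompact_Icc.image hc).bddAbove
  have hmem : (1 - τ / 2) * Real.log 2
      ∈ (fun q : ℝ => (1 - q * τ) * binEnt q) '' Set.Icc (0:ℝ) 1 := by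
    refine ⟨1/2, ⟨by norm_num, by norm_num⟩, ?_⟩
    simp only []; rw [binEnt_half]; ring
  exact le_csSup hbdd hmem

/-- The capacity of the measurement-dependent BEC satisfies
`C(τ) = max_q (1−qτ)h_b(q) ≥ (1−τ/2)·log 2 > 0` for every `τ ∈ [0,1]`;
in particular `C(1) ≥ (log 2)/2 > 0`. -/
theorem stmt_14 (τ : ℝ) (hτ : τ ∈ Set.Icc (0:ℝ) 1) :
    ((1 - τ / 2) * Real.log 2
        ≤ sSup ((fun q : ℝ => (1 - q * τ) * binEnt q) '' Set.Icc (0:ℝ) 1)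
      ∧ 0 < (1 - τ / 2) * Real.log 2)
    ∧ (Real.log 2 / 2
        ≤ sSup ((fun q : ℝ => (1 - q * 1) * binEnt q) '' Set.Icc (0:ℝ) 1)
      ∧ 0 < Real.log 2 / 2) := by
  obtain ⟨h0, h1⟩ := hτ
  have hlog : (0:ℝ) < Real.log 2 := Real.log_pos (by norm_num)
  refine ⟨⟨key τ ⟨h0, h1⟩, ?_⟩, ⟨?_, by positivity⟩⟩
  · have : (0:ℝ) < 1 - τ/2 := by linarith
    positivity
  · have := key 1 ⟨by norm_num, le_refl 1⟩
    linarith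
end

section
/- Fix ε ∈ (0,1), C > 0, V > 0. Given an adaptive query procedure achieving average query count l' and excess-resolution probability 1/l' at resolution δ' with −d log δ' = l'C + O(log l'), the randomized procedure that with probability (εl'−1)/(l'−1) makes no queries (declaring failure) and otherwise runs the given procedure achieves, for l' sufficiently large, average query count l = (1−ε)l'·l'/(l'−1) and excess-resolution probability at most ε, giving −d log δ'_a(l, d, ε) ≥ lC/(1−ε) + O(log l). -/
/-- Time-sharing arithmetic for adaptive querying: mixing an adaptive procedure
with average query count `l'` and error probability `1/l'` with the trivial
(no-query) procedure, using weight `(εl'−1)/(l'−1)` on the trivial one, gives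
error probability at most `ε` and average query count `l'²(1−ε)/(l'−1)`. -/
theorem stmt_16 (ε l' : ℝ) (hε : ε ∈ Set.Ioo (0:ℝ) 1)
    (hl1 : 1 < l') (hl2 : 1 ≤ ε * l') :
    (ε * l' - 1) / (l' - 1) + (1 - (ε * l' - 1) / (l' - 1)) * (1 / l') ≤ ε
    ∧ (1 - (ε * l' - 1) / (l' - 1)) * l' = l' ^ 2 * (1 - ε) / (l' - 1) := by
  have h1 : l' - 1 ≠ 0 := by linarith
  have h2 : l' ≠ 0 := by linarith
  constructor
  · have : (ε * l' - 1) / (l' - 1) + (1 - (ε * l' - 1) / (l' - 1)) * (1 / l') = ε := by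
      field_simp
      ring
    linarith [this]
  · field_simp
    ring
end
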